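/- arXiv:1905.09562 — 2 statements merged into one kernel-verified Lean document; each statement's English description precedes it below -/
import Mathlib

section
/- Suppose γ ∈ [0,1), D ∈ (0.5,1] with D > γ, and rewards r(s) satisfy R_min ≤ r(s) ≤ R̃_max with D·R̃_max ≤ R_min. Define V_max = R̃_max / (1 - (γ + (1-D))) and V_min = R_min / (1 - (γ - (1-D))). If a noisy operator T̃ satisfies R_min + γV_min - (1-C)(V_max - V_min) ≤ T̃V(s) ≤ R̃_max + γV_max + (1-C)(V_max - V_min) for all s, and the threshold C satisfies (1-C)(V_max - V_min) ≤ (1-D)V_min, then V_min ≤ T̃V(s) ≤ V_max for all s; i.e., T̃ maps the set X = {V : ∀s, V_min ≤ V(s) ≤ V_max} into itself. -/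
/-! Both bounds are the Bellman fixed points `V = R / (1 - κ)`, i.e. `V = R + κ V`, for the
effective discounts `κ = γ ± (1 - D)`. The threshold condition caps the noise by `(1 - D) Vmin`,
which turns the lower bound on `T̃V` into `Rmin + (γ - (1 - D)) Vmin = Vmin`, and, since
`Vmin ≤ Vmax`, the upper bound into at most `Rmax + (γ + (1 - D)) Vmax = Vmax`. -/

theorem eq_add_mul_self_of_eq_div_one_sub {K : Type*} [Field K] {R κ V : K}
    (hκ : 1 - κ ≠ 0) (hV : V = R / (1 - κ)) : V = R + κ * V := by
  subst hV
  field_simp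
  ring

theorem rvf_operator_maps_into_X_general {S : Type*}
    (γ D C Rmin Rmax Vmin Vmax : ℝ)
    (hD1 : D ≤ 1) (hDγ : γ < D)
    (r : S → ℝ) (hr : ∀ s, Rmin ≤ r s ∧ r s ≤ Rmax)
    (hRpos : 0 < Rmin)
    (hVmax : Vmax = Rmax / (1 - (γ + (1 - D))))
    (hVmin : Vmin = Rmin / (1 - (γ - (1 - D))))
    (TV : S → ℝ)
    (hTub : ∀ s, TV s ≤ Rmax + γ * Vmax + (1 - C) * (Vmax - Vmin))
    (hTlb : ∀ s, Rmin + γ * Vmin - (1 - C) * (Vmax - Vmin) ≤ TV s)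
    (hC : (1 - C) * (Vmax - Vmin) ≤ (1 - D) * Vmin) :
    ∀ s, Vmin ≤ TV s ∧ TV s ≤ Vmax := by
  intro s
  have hdenmax : 0 < 1 - (γ + (1 - D)) := by linarith
  have hdenmin : 0 < 1 - (γ - (1 - D)) := by linarith
  have hfixmax := eq_add_mul_self_of_eq_div_one_sub hdenmax.ne' hVmax
  have hfixmin := eq_add_mul_self_of_eq_div_one_sub hdenmin.ne' hVmin
  have hRle : Rmin ≤ Rmax := (hr s).1.trans (hr s).2
  have hVle : Vmin ≤ Vmax := by
    rw [hVmin, hVmax]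
    exact div_le_div₀ (hRpos.le.trans hRle) hRle hdenmax (by linarith)
  have hnoise : (1 - D) * Vmin ≤ (1 - D) * Vmax :=
    mul_le_mul_of_nonneg_left hVle (sub_nonneg.2 hD1)
  exact ⟨by linarith [hTlb s], by linarith [hTub s]⟩

/-- The noisy recurrent Bellman operator maps the set
`X = {V : ∀ s, Vmin ≤ V(s) ≤ Vmax}` into itself: under the reward-scaling
assumption `D·R̃max ≤ Rmin` and the threshold condition
`(1-C)(Vmax - Vmin) ≤ (1-D)Vmin`, the stated bounds on `T̃V` imply
`Vmin ≤ T̃V(s) ≤ Vmax` for all `s`. -/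
theorem rvf_operator_maps_into_X {S : Type*}
    (γ D C Rmin Rmax Vmin Vmax : ℝ)
    (hγ : 0 ≤ γ) (hγ1 : γ < 1)
    (hD : 1/2 < D) (hD1 : D ≤ 1) (hDγ : γ < D)
    (r : S → ℝ) (hr : ∀ s, Rmin ≤ r s ∧ r s ≤ Rmax)
    (hRpos : 0 < Rmin) (hscale : D * Rmax ≤ Rmin)
    (hVmax : Vmax = Rmax / (1 - (γ + (1 - D))))
    (hVmin : Vmin = Rmin / (1 - (γ - (1 - D))))
    (TV : S → ℝ)
    (hTub : ∀ s, TV s ≤ Rmax + γ * Vmax + (1 - C) * (Vmax - Vmin))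
    (hTlb : ∀ s, Rmin + γ * Vmin - (1 - C) * (Vmax - Vmin) ≤ TV s)
    (hC : (1 - C) * (Vmax - Vmin) ≤ (1 - D) * Vmin) :
    ∀ s, Vmin ≤ TV s ∧ TV s ≤ Vmax :=
  rvf_operator_maps_into_X_general γ D C Rmin Rmax Vmin Vmax hD1 hDγ r hr hRpos hVmax hVmin TV hTub
    hTlb hC
end

section
/- Under the assumptions D ∈ (0.5,1], γ ∈ [0,1), γ + (1-D) < 1, if the regularization terms satisfy |Δ^V(s') - Δ^U(s')| ≤ (1-D)|V(s') - U(s')| for all value functions U, V and states s', then the operator T^β V(s_i) = E_π[r_t + γV(s_{t+1}) + Δ_t^V(s_i)] satisfies ‖T^β V - T^β U‖_∞ ≤ (γ + (1-D)) ‖V - U‖_∞, and γ + (1-D) < 1, so T^β is a contraction in the sup norm. -/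
open Finset

/-!
Subtracting the two Bellman sums kills the reward, leaving, at each state `s`, an expectation of
`γ (V s' - U s') + (Δ^V s - Δ^U s)`. Each such term is bounded by `(γ + (1-D)) ‖V - U‖_∞`, and an
expectation under a probability vector cannot exceed a uniform bound on its integrand.
-/

theorem abs_sum_mul_le_of_sum_eq_one {ι : Type*} [Fintype ι] {p x : ι → ℝ} {c : ℝ}
    (hp : ∀ i, 0 ≤ p i) (hsum : ∑ i, p i = 1) (hx : ∀ i, |x i| ≤ c) : |∑ i, p i * x i| ≤ c :=
  calc |∑ i, p i * x i|
      ≤ ∑ i, |p i * x i| := abs_sum_le_sum_abs _ _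
    _ = ∑ i, p i * |x i| := by simp only [abs_mul, abs_of_nonneg (hp _)]
    _ ≤ ∑ i, p i * c := sum_le_sum fun i _ => mul_le_mul_of_nonneg_left (hx i) (hp i)
    _ = c := by rw [← sum_mul, hsum, one_mul]

theorem abs_sub_le_iSup_abs_sub {ι : Type*} [Finite ι] (f g : ι → ℝ) (i : ι) :
    |f i - g i| ≤ ⨆ j, |f j - g j| :=
  le_ciSup (f := fun j => |f j - g j|) (Set.finite_range _).bddAbove i

section RegularizedBellman

variable {S : Type*} [Fintype S]

def regBellman (P : S → S → ℝ) (r : S → ℝ) (γ : ℝ) (Δ : (S → ℝ) → S → ℝ) (V : S → ℝ) (s : S) :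
    ℝ :=
  ∑ s', P s s' * (r s + γ * V s' + Δ V s)

theorem regBellman_sub_regBellman (P : S → S → ℝ) (r : S → ℝ) (γ : ℝ) (Δ : (S → ℝ) → S → ℝ)
    (U V : S → ℝ) (s : S) :
    regBellman P r γ Δ V s - regBellman P r γ Δ U s =
      ∑ s', P s s' * (γ * (V s' - U s') + (Δ V s - Δ U s)) := by
  simp only [regBellman, ← sum_sub_distrib]
  congr 1 with s'
  ring

theorem abs_regBellman_sub_le {P : S → S → ℝ} (hP : ∀ s s', 0 ≤ P s s')
    (hPsum : ∀ s, ∑ s', P s s' = 1) (r : S → ℝ) {γ L : ℝ} (hγ : 0 ≤ γ) (hL : 0 ≤ L)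
    {Δ : (S → ℝ) → S → ℝ} (hΔ : ∀ U V s, |Δ V s - Δ U s| ≤ L * |V s - U s|)
    (U V : S → ℝ) (s : S) :
    |regBellman P r γ Δ V s - regBellman P r γ Δ U s| ≤ (γ + L) * ⨆ t, |V t - U t| := by
  rw [regBellman_sub_regBellman]
  refine abs_sum_mul_le_of_sum_eq_one (hP s) (hPsum s) fun s' => ?_
  calc |γ * (V s' - U s') + (Δ V s - Δ U s)|
      ≤ γ * |V s' - U s'| + L * |V s - U s| := by
        grw [abs_add_le, abs_mul, abs_of_nonneg hγ, hΔ]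
    _ ≤ γ * (⨆ t, |V t - U t|) + L * ⨆ t, |V t - U t| := by
        grw [abs_sub_le_iSup_abs_sub V U s', abs_sub_le_iSup_abs_sub V U s]
    _ = (γ + L) * ⨆ t, |V t - U t| := by ring

end RegularizedBellman

theorem rvf_operator_contraction_general {S : Type*} [Fintype S]
    (γ D : ℝ) (hγ : 0 ≤ γ)
    (hD1 : D ≤ 1) (hcontr : γ + (1 - D) < 1)
    (P : S → S → ℝ) (hP : ∀ s s', 0 ≤ P s s')
    (hPsum : ∀ s, ∑ s' : S, P s s' = 1)
    (r : S → ℝ)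
    (Δ : (S → ℝ) → S → ℝ)
    (hΔ : ∀ (U V : S → ℝ) (s : S), |Δ V s - Δ U s| ≤ (1 - D) * |V s - U s|)
    (T : (S → ℝ) → S → ℝ)
    (hT : ∀ (V : S → ℝ) (s : S),
      T V s = ∑ s' : S, P s s' * (r s + γ * V s' + Δ V s)) :
    (∀ U V : S → ℝ,
      (⨆ s : S, |T V s - T U s|) ≤ (γ + (1 - D)) * ⨆ s : S, |V s - U s|) ∧
      γ + (1 - D) < 1 := by
  obtain rfl : T = regBellman P r γ Δ := funext fun V => funext (hT V)
  have hD : 0 ≤ 1 - D := by linarith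
  refine ⟨fun U V => ?_, hcontr⟩
  exact Real.iSup_le (abs_regBellman_sub_le hP hPsum r hγ hD hΔ U V)
    (mul_nonneg (add_nonneg hγ hD) (Real.iSup_nonneg fun _ => abs_nonneg _))

/-- The recurrent Bellman operator
`T^β V(s) = E_π[r + γ V(s') + Δ^V(s)]` is a sup-norm contraction with
modulus `γ + (1-D) < 1`, provided the regularization terms satisfy
`|Δ^V(s) - Δ^U(s)| ≤ (1-D)|V(s) - U(s)|`. -/
theorem rvf_operator_contraction {S : Type*} [Fintype S] [Nonempty S]
    (γ D : ℝ) (hγ : 0 ≤ γ) (hγ1 : γ < 1)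
    (hD : 1/2 < D) (hD1 : D ≤ 1) (hcontr : γ + (1 - D) < 1)
    (P : S → S → ℝ) (hP : ∀ s s', 0 ≤ P s s')
    (hPsum : ∀ s, ∑ s' : S, P s s' = 1)
    (r : S → ℝ)
    (Δ : (S → ℝ) → S → ℝ)
    (hΔ : ∀ (U V : S → ℝ) (s : S), |Δ V s - Δ U s| ≤ (1 - D) * |V s - U s|)
    (T : (S → ℝ) → S → ℝ)
    (hT : ∀ (V : S → ℝ) (s : S),
      T V s = ∑ s' : S, P s s' * (r s + γ * V s' + Δ V s)) :
    (∀ U V : S → ℝ,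
      (⨆ s : S, |T V s - T U s|) ≤ (γ + (1 - D)) * ⨆ s : S, |V s - U s|) ∧
      γ + (1 - D) < 1 :=
  rvf_operator_contraction_general γ D hγ hD1 hcontr P hP hPsum r Δ hΔ T hT
end
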